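/- arXiv:2006.13705 — 2 statements merged into one kernel-verified Lean document; each statement's English description precedes it below -/
import Mathlib

section
/- Let A be an abelian group and X : ℕ → Set_* a tower of pointed sets satisfying the Mittag-Leffler condition. Then: (1) if A is p-divisible for a prime p, then G(X,A) and H(X,A) are p-divisible; (2) if A is divisible, then G(X,A) and H(X,A) are divisible; (3) if A is almost divisible, then G(X,A) and H(X,A) are almost divisible. -/
/-!
Under the Mittag-Leffler condition the stable images `X'(t) = ⋂_{s ≥ t} Im(X s → X t)` form a
tower of surjections, and every element of `G(X, A) = lim (X ∧ A)` is supported on it. Using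
sections of these surjections, an `n`-th root of a compatible family is built stage by stage:
divide pointwise, then correct by the part that the previous stage does not see. So `G(X, A)`
inherits `n`-divisibility from `A`, and so does its quotient `H(X, A)`.
For `A = D ⊕ B` with `D` divisible and `mB = 0`, the additive functors `G(X, -)` and `H(X, -)`
split `G(X, A)` and `H(X, A)` as the images of their values at `D`, which are divisible, and at
`B`, which are killed by `m`.
-/

open CategoryTheory Finsupp

universe u v w

/-- The smash product `Y ∧ A` of a pointed set `(Y, y0)` with an abelian group `A`:
the group of finitely supported functions `Y →₀ A` vanishing at the basepoint,
i.e. `⊕_{y ∈ Y∖{y0}} A`. -/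
def Smash (Y : Type u) (y0 : Y) (A : Type v) [AddCommGroup A] :
    AddSubgroup (Y →₀ A) where
  carrier := {f | f y0 = 0}
  add_mem' := by
    intro a b ha hb
    simp only [Set.mem_setOf_eq, Finsupp.add_apply] at *
    rw [ha, hb, add_zero]
  zero_mem' := by simp
  neg_mem' := by
    intro a ha
    simp only [Set.mem_setOf_eq, Finsupp.neg_apply] at *
    rw [ha, neg_zero]

theorem mem_smash {Y : Type u} {y0 : Y} {A : Type v} [AddCommGroup A] {f : Y →₀ A} :
    f ∈ Smash Y y0 A ↔ f y0 = 0 := Iff.rfl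

/-- The pushforward homomorphism `g_* : Y∧A → Z∧A` induced by a (pointed) map
`g : Y → Z`: `(g_* f)(z) = ∑_{y : g y = z} f y` for `z ≠ z0`, and `(g_* f)(z0) = 0`. -/
noncomputable def smashMap {Y : Type u} {Z : Type v} (y0 : Y) (z0 : Z) (g : Y → Z)
    (A : Type w) [AddCommGroup A] :
    Smash Y y0 A →+ Smash Z z0 A where
  toFun f := ⟨(Finsupp.mapDomain g f.1).erase z0, Finsupp.erase_same⟩
  map_zero' := by
    apply Subtype.ext
    simp
  map_add' f₁ f₂ := by
    apply Subtype.ext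
    show (Finsupp.mapDomain g ((f₁ : Y →₀ A) + (f₂ : Y →₀ A))).erase z0 = _
    rw [Finsupp.mapDomain_add, Finsupp.erase_add]
    rfl

theorem smashMap_comp {Y : Type u} {Z : Type v} {W : Type w} (y0 : Y) (z0 : Z) (w0 : W)
    (g : Y → Z) (g' : Z → W) (hg' : g' z0 = w0)
    (A : Type*) [AddCommGroup A] (f : Smash Y y0 A) :
    smashMap z0 w0 g' A (smashMap y0 z0 g A f) = smashMap y0 w0 (g' ∘ g) A f := by
  classical
  apply Subtype.ext
  show (Finsupp.mapDomain g' ((Finsupp.mapDomain g f.1).erase z0)).erase w0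
      = (Finsupp.mapDomain (g' ∘ g) f.1).erase w0
  rw [Finsupp.mapDomain_comp]
  set h := Finsupp.mapDomain g f.1 with hh
  have key : Finsupp.mapDomain g' (h.erase z0)
      = Finsupp.mapDomain g' h - Finsupp.single w0 (h z0) := by
    have h1 : h.erase z0 = h - Finsupp.single z0 (h z0) := by
      ext a
      by_cases ha : a = z0
      · subst ha; simp
      · simp [Finsupp.erase_ne ha, Finsupp.single_apply, Ne.symm ha, ha]
    rw [h1]
    have h2 := map_sub (Finsupp.mapDomain.addMonoidHom g') h (Finsupp.single z0 (h z0))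
    simp only [Finsupp.mapDomain.addMonoidHom_apply] at h2
    rw [h2, Finsupp.mapDomain_single, hg']
  rw [key]
  ext a
  by_cases ha : a = w0
  · subst ha; simp
  · simp [Finsupp.erase_ne ha, Finsupp.single_apply, Ne.symm ha, ha]
/-- The inverse limit of a diagram of pointed sets, as a subset of the product. -/
def plim {D : Type u} [Category.{v} D] (F : D ⥤ Pointed.{w}) :
    Set (∀ d : D, (F.obj d).X) :=
  {x | ∀ ⦃d d' : D⦄ (u : d ⟶ d'), (F.map u).toFun (x d) = x d'}

/-- The basepoint of the inverse limit of a diagram of pointed sets. -/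
def plimPt {D : Type u} [Category.{v} D] (F : D ⥤ Pointed.{w}) : plim F :=
  ⟨fun d => (F.obj d).point, fun _ _ u => (F.map u).map_point⟩

/-- The inverse limit `lim_D (X ∧ A)` of the diagram of abelian groups obtained by
smashing a diagram of pointed sets with an abelian group `A`. -/
noncomputable def glim {D : Type u} [Category.{v} D] (F : D ⥤ Pointed.{w})
    (A : Type*) [AddCommGroup A] :
    AddSubgroup (∀ d : D, Smash (F.obj d).X (F.obj d).point A) where
  carrier := {h | ∀ ⦃d d' : D⦄ (u : d ⟶ d'),
      smashMap (F.obj d).point (F.obj d').point (F.map u).toFun A (h d) = h d'}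
  add_mem' := by
    intro a b ha hb d d' u
    rw [Pi.add_apply, map_add, ha u, hb u]
    rfl
  zero_mem' := by
    intro d d' u
    rw [Pi.zero_apply, map_zero]
    rfl
  neg_mem' := by
    intro a ha d d' u
    rw [Pi.neg_apply, map_neg, ha u]
    rfl

/-- The natural map `ρ : (lim_D X) ∧ A → lim_D (X ∧ A)`, whose component at `d`
is induced by the projection `lim_D X → X d`. -/
noncomputable def rho {D : Type u} [Category.{v} D] (F : D ⥤ Pointed.{w})
    (A : Type*) [AddCommGroup A] :
    Smash (plim F) (plimPt F) A →+ glim F A where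
  toFun f := ⟨fun d => smashMap (plimPt F) (F.obj d).point (fun x => x.1 d) A f, by
    intro d d' u
    rw [smashMap_comp (plimPt F) (F.obj d).point (F.obj d').point _ _ (F.map u).map_point A f]
    have : ((F.map u).toFun ∘ fun x : plim F => x.1 d) = fun x : plim F => x.1 d' := by
      funext x
      exact x.2 u
    rw [this]⟩
  map_zero' := by
    apply Subtype.ext
    funext d
    show smashMap (plimPt F) (F.obj d).point (fun x => x.1 d) A 0 = (0 : Smash _ _ A)
    exact map_zero _
  map_add' f₁ f₂ := by
    apply Subtype.ext
    funext d
    show smashMap (plimPt F) (F.obj d).point (fun x => x.1 d) A (f₁ + f₂)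
        = smashMap (plimPt F) (F.obj d).point (fun x => x.1 d) A f₁
          + smashMap (plimPt F) (F.obj d).point (fun x => x.1 d) A f₂
    exact map_add _ f₁ f₂
/-- The Mittag-Leffler condition for a diagram of pointed sets indexed by a
preordered set `T` (with structure maps `X(s) → X(t)` for `t ≤ s`): for every `t`
there is `s ≥ t` such that for every `r ≥ s` the images of `X(s)` and of `X(r)`
in `X(t)` coincide. -/
def MittagLeffler {T : Type u} [Preorder T] (F : Tᵒᵖ ⥤ Pointed.{w}) : Prop :=
  ∀ t : T, ∃ s : T, ∃ hts : t ≤ s, ∀ r : T, ∀ hsr : s ≤ r,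
    Set.range (F.map (homOfLE hts).op).toFun
      = Set.range (F.map (homOfLE (hts.trans hsr)).op).toFun
/-- A subgroup `S` of an abelian group `G` is divisible if `nS = S` for all `n ≥ 1`. -/
def DivisibleSubgroup {G : Type*} [AddCommGroup G] (S : AddSubgroup G) : Prop :=
  ∀ n : ℕ, 1 ≤ n → ∀ x ∈ S, ∃ y ∈ S, n • y = x

/-- A subgroup `S` of an abelian group `G` is bounded if `mS = 0` for some `m ≥ 1`. -/
def BoundedSubgroup {G : Type*} [AddCommGroup G] (S : AddSubgroup G) : Prop :=
  ∃ m : ℕ, 1 ≤ m ∧ ∀ x ∈ S, m • x = 0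

/-- A group is almost divisible if it is the (internal) direct sum of a divisible
subgroup and a bounded subgroup. -/
def AlmostDivisible (G : Type*) [AddCommGroup G] : Prop :=
  ∃ D B : AddSubgroup G, IsCompl D B ∧ DivisibleSubgroup D ∧ BoundedSubgroup B

theorem exists_seq_of_forall_exists_succ {α : ℕ → Type*} (P : ∀ t, α t → Prop)
    (R : ∀ t, α (t + 1) → α t → Prop) (h0 : ∃ a, P 0 a)
    (h : ∀ t a, P t a → ∃ b, P (t + 1) b ∧ R t b a) :
    ∃ f : ∀ t, α t, ∀ t, P t (f t) ∧ R t (f (t + 1)) (f t) := by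
  choose a0 ha0 using h0
  choose next hnext using h
  let f : ∀ t, {a // P t a} := fun t =>
    Nat.rec ⟨a0, ha0⟩ (fun t a => ⟨next t a.1 a.2, (hnext t a.1 a.2).1⟩) t
  exact ⟨fun t => (f t).1, fun t => ⟨(f t).2, (hnext t _ (f t).2).2⟩⟩

theorem exists_nsmul_eq_of_surjective {G H : Type*} [AddCommGroup G] [AddCommGroup H]
    {f : G →+ H} (hf : Function.Surjective f) {n : ℕ} (hG : ∀ x : G, ∃ y, n • y = x)
    (x : H) : ∃ y, n • y = x := by
  obtain ⟨x, rfl⟩ := hf x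
  obtain ⟨y, rfl⟩ := hG x
  exact ⟨f y, (map_nsmul f n y).symm⟩

theorem nsmul_eq_zero_of_surjective {G H : Type*} [AddCommGroup G] [AddCommGroup H]
    {f : G →+ H} (hf : Function.Surjective f) {m : ℕ} (hG : ∀ x : G, m • x = 0)
    (x : H) : m • x = 0 := by
  obtain ⟨x, rfl⟩ := hf x
  rw [← map_nsmul, hG, map_zero]

section Smash

variable {Y : Type u} {Z : Type v} {A : Type*} [AddCommGroup A]

@[simp]
theorem Smash.coe_apply_basepoint {y0 : Y} (f : Smash Y y0 A) : (f : Y →₀ A) y0 = 0 := f.2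

theorem coe_smashMap (y0 : Y) (z0 : Z) (g : Y → Z) (f : Smash Y y0 A) :
    (smashMap y0 z0 g A f : Z →₀ A) = (mapDomain g (f : Y →₀ A)).erase z0 := rfl

theorem smashMap_mem_supported {y0 : Y} {z0 : Z} {g : Y → Z} {f : Smash Y y0 A} {T : Set Y}
    (hf : (f : Y →₀ A) ∈ supported A ℤ T) :
    (smashMap y0 z0 g A f : Z →₀ A) ∈ supported A ℤ (g '' T) := by
  classical
  rw [mem_supported, coe_smashMap, support_erase, Finset.coe_erase]
  refine Set.sdiff_subset.trans ?_
  refine (Finset.coe_subset.2 mapDomain_support).trans ?_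
  rw [Finset.coe_image]
  exact Set.image_mono ((mem_supported ℤ _).1 hf)

theorem smashMap_eq_self {y0 : Y} {g : Y → Y} {f : Smash Y y0 A}
    (hg : ∀ y ∈ (f : Y →₀ A).support, g y = y) : smashMap y0 y0 g A f = f := by
  apply Subtype.ext
  rw [coe_smashMap, mapDomain_congr (g := id) hg, mapDomain_id]
  exact erase_of_notMem_support (by simp)

theorem smashMap_smashMap_of_leftInvOn {y0 : Y} {z0 : Z} {p : Z → Y} (hp : p z0 = y0)
    {σ : Y → Z} {T : Set Y} (h : Set.LeftInvOn p σ T) {f : Smash Y y0 A}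
    (hf : (f : Y →₀ A) ∈ supported A ℤ T) :
    smashMap z0 y0 p A (smashMap y0 z0 σ A f) = f := by
  rw [smashMap_comp y0 z0 y0 σ p hp]
  exact smashMap_eq_self fun y hy => h ((mem_supported ℤ _).1 hf hy)

theorem exists_smash_nsmul_eq {y0 : Y} {n : ℕ} (hA : ∀ a : A, ∃ b, n • b = a)
    (f : Smash Y y0 A) :
    ∃ k : Smash Y y0 A, n • k = f ∧ (k : Y →₀ A).support ⊆ (f : Y →₀ A).support := by
  classical
  choose c hc using hA
  -- `c 0` need not be `0`, so divide `0` by hand to keep the support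
  let c' : A → A := fun a => if a = 0 then 0 else c a
  have hc' : ∀ a, n • c' a = a := fun a => by
    by_cases ha : a = 0 <;> simp [c', ha, hc]
  have hc'0 : c' 0 = 0 := if_pos rfl
  refine ⟨⟨mapRange c' hc'0 f, by simp [mem_smash, hc'0]⟩, ?_, support_mapRange (hf := hc'0)⟩
  apply Subtype.ext
  ext y
  simp [hc']

/-- Correct the naive lift of `g` through a section of `p` by an `n`-th root of the part of `x`
that this lift misses. -/
theorem exists_smash_lift_nsmul {y0 : Y} {z0 : Z} {p : Z → Y} (hp : p z0 = y0)
    {T : Set Y} {T' : Set Z} (hT : p '' T' = T) {n : ℕ} (hA : ∀ a : A, ∃ b, n • b = a)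
    {x : Smash Z z0 A} (hx : (x : Z →₀ A) ∈ supported A ℤ T')
    {g : Smash Y y0 A} (hg : (g : Y →₀ A) ∈ supported A ℤ T)
    (hgx : n • g = smashMap z0 y0 p A x) :
    ∃ g' : Smash Z z0 A, (g' : Z →₀ A) ∈ supported A ℤ T' ∧ n • g' = x ∧
      smashMap z0 y0 p A g' = g := by
  have : Nonempty Z := ⟨z0⟩
  set σ := Function.invFunOn p T'
  have hsurj : Set.SurjOn p T' T := hT ▸ Set.surjOn_image p T'
  have hσT : Set.MapsTo σ T T' := hsurj.mapsTo_invFunOn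
  have hpT : Set.MapsTo p T' T := hT ▸ Set.mapsTo_image p T'
  have retract : ∀ f : Smash Y y0 A, (f : Y →₀ A) ∈ supported A ℤ T →
      smashMap z0 y0 p A (smashMap y0 z0 σ A f) = f := fun _ =>
    smashMap_smashMap_of_leftInvOn hp hsurj.rightInvOn_invFunOn
  have push : ∀ f : Smash Z z0 A, (f : Z →₀ A) ∈ supported A ℤ T' →
      (smashMap z0 y0 p A f : Y →₀ A) ∈ supported A ℤ T := fun f hf =>
    supported_mono hpT.image_subset (smashMap_mem_supported hf)
  have lift : ∀ f : Smash Y y0 A, (f : Y →₀ A) ∈ supported A ℤ T →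
      (smashMap y0 z0 σ A f : Z →₀ A) ∈ supported A ℤ T' := fun f hf =>
    supported_mono hσT.image_subset (smashMap_mem_supported hf)
  set k := x - smashMap y0 z0 σ A (smashMap z0 y0 p A x)
  have hk : (k : Z →₀ A) ∈ supported A ℤ T' :=
    sub_mem hx (lift _ (push _ hx))
  have hpk : smashMap z0 y0 p A k = 0 := by
    rw [map_sub, retract _ (push _ hx), sub_self]
  obtain ⟨k', hnk', hk'⟩ := exists_smash_nsmul_eq hA k
  have hk'T : (k' : Z →₀ A) ∈ supported A ℤ T' :=
    (mem_supported ℤ _).2 ((Finset.coe_subset.2 hk').trans ((mem_supported ℤ _).1 hk))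
  refine ⟨smashMap y0 z0 σ A g + k' - smashMap y0 z0 σ A (smashMap z0 y0 p A k'),
    sub_mem (add_mem (lift g hg) hk'T) (lift _ (push _ hk'T)), ?_, ?_⟩
  · rw [smul_sub, smul_add, ← map_nsmul, ← map_nsmul, ← map_nsmul, hgx, hnk', hpk, map_zero,
      sub_zero, add_sub_cancel]
  · rw [map_sub, map_add, retract g hg, retract _ (push _ hk'T), add_sub_cancel_right]

end Smash

section Tower

open Opposite

variable (F : ℕᵒᵖ ⥤ Pointed.{w})

abbrev towerObj (t : ℕ) : Type w := (F.obj (op t)).X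

abbrev towerPt (t : ℕ) : towerObj F t := (F.obj (op t)).point

abbrev towerMap {t s : ℕ} (h : t ≤ s) : towerObj F s → towerObj F t :=
  (F.map (homOfLE h).op).toFun

theorem towerMap_pt {t s : ℕ} (h : t ≤ s) : towerMap F h (towerPt F s) = towerPt F t :=
  (F.map (homOfLE h).op).map_point

theorem towerMap_comp {t s r : ℕ} (hts : t ≤ s) (hsr : s ≤ r) :
    towerMap F hts ∘ towerMap F hsr = towerMap F (hts.trans hsr) := by
  dsimp only [towerMap]
  rw [← homOfLE_comp hts hsr, op_comp, F.map_comp]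
  rfl

theorem towerMap_refl (t : ℕ) : towerMap F (le_refl t) = id := by
  change (F.map (𝟙 (op t))).toFun = id
  rw [F.map_id]
  rfl

theorem range_towerMap_subset {t s r : ℕ} (hts : t ≤ s) (hsr : s ≤ r) :
    Set.range (towerMap F (hts.trans hsr)) ⊆ Set.range (towerMap F hts) := by
  rw [← towerMap_comp F hts hsr]
  exact Set.range_comp_subset_range _ _

def stableImage (t : ℕ) : Set (towerObj F t) :=
  ⋂ (s : ℕ) (h : t ≤ s), Set.range (towerMap F h)

variable {F}

theorem MittagLeffler.exists_stableImage_eq (hML : MittagLeffler F) (t : ℕ) :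
    ∃ s, ∃ hts : t ≤ s, ∀ r (hsr : s ≤ r),
      stableImage F t = Set.range (towerMap F (hts.trans hsr)) := by
  obtain ⟨s, hts, hs⟩ := hML t
  refine ⟨s, hts, fun r hsr => Set.Subset.antisymm (Set.iInter₂_subset _ _) ?_⟩
  rw [← hs r hsr]
  refine Set.subset_iInter₂ fun s' hs' => ?_
  rw [hs (max s s') (le_max_left _ _)]
  exact range_towerMap_subset F hs' (le_max_right _ _)

theorem MittagLeffler.image_stableImage (hML : MittagLeffler F) (t : ℕ) :
    towerMap F t.le_succ '' stableImage F (t + 1) = stableImage F t := by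
  obtain ⟨s₀, h₀, hs₀⟩ := hML.exists_stableImage_eq t
  obtain ⟨s₁, h₁, hs₁⟩ := hML.exists_stableImage_eq (t + 1)
  apply Set.Subset.antisymm
  · rintro _ ⟨y, hy, rfl⟩
    refine Set.mem_iInter₂.2 fun s hs => ?_
    obtain ⟨z, rfl⟩ := Set.mem_iInter₂.1 hy (s + 1) (Nat.succ_le_succ hs)
    refine range_towerMap_subset F hs s.le_succ ⟨z, ?_⟩
    exact (congrFun (towerMap_comp F _ _) z).symm
  · intro y hy
    rw [hs₀ (max s₀ s₁) (le_max_left _ _)] at hy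
    obtain ⟨z, rfl⟩ := hy
    refine ⟨towerMap F (h₁.trans (le_max_right s₀ s₁)) z, ?_, ?_⟩
    · rw [hs₁ (max s₀ s₁) (le_max_right _ _)]
      exact Set.mem_range_self z
    · exact congrFun (towerMap_comp F _ _) z

variable {A : Type*} [AddCommGroup A]

theorem glim_compat (x : glim F A) {t s : ℕ} (h : t ≤ s) :
    smashMap (towerPt F s) (towerPt F t) (towerMap F h) A (x.1 (op s)) = x.1 (op t) :=
  x.2 (homOfLE h).op

theorem glim_mem_supported_stableImage (x : glim F A) (t : ℕ) :
    ((x.1 (op t) : Smash (towerObj F t) (towerPt F t) A) : towerObj F t →₀ A) ∈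
      supported A ℤ (stableImage F t) := by
  refine (mem_supported ℤ _).2 fun y hy => Set.mem_iInter₂.2 fun s h => ?_
  rw [← glim_compat x h] at hy
  have := (mem_supported ℤ _).1
    (smashMap_mem_supported (g := towerMap F h) (z0 := towerPt F t)
      ((mem_supported ℤ _).2 (Set.subset_univ _))) hy
  exact Set.image_subset_range _ _ this

theorem mem_glim_of_succ (g : ∀ t, Smash (towerObj F t) (towerPt F t) A)
    (hg : ∀ t, smashMap (towerPt F (t + 1)) (towerPt F t) (towerMap F t.le_succ) A (g (t + 1))
      = g t) :
    (fun d : ℕᵒᵖ => g d.unop) ∈ glim F A := by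
  have key : ∀ t s (h : t ≤ s), smashMap (towerPt F s) (towerPt F t) (towerMap F h) A (g s)
      = g t := by
    intro t s h
    induction s, h using Nat.le_induction with
    | base => exact smashMap_eq_self fun y _ => congrFun (towerMap_refl F t) y
    | succ s hts ih =>
      rw [← towerMap_comp F hts s.le_succ, ← smashMap_comp _ _ _ _ _ (towerMap_pt F hts), hg, ih]
  intro d d' u
  have h : d'.unop ≤ d.unop := leOfHom u.unop
  rw [show u = (homOfLE h).op from Subsingleton.elim _ _]
  exact key _ _ h

end Tower

section Functoriality

variable {Y : Type u} {Z : Type v} {A B : Type*} [AddCommGroup A] [AddCommGroup B]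

noncomputable def smashMapRange (y0 : Y) (φ : A →+ B) : Smash Y y0 A →+ Smash Y y0 B :=
  ((mapRange.addMonoidHom φ).comp (Smash Y y0 A).subtype).codRestrict _ fun f => by
    simp [mem_smash]

theorem coe_smashMapRange (y0 : Y) (φ : A →+ B) (f : Smash Y y0 A) :
    (smashMapRange y0 φ f : Y →₀ B) = mapRange φ φ.map_zero (f : Y →₀ A) := rfl

theorem smashMap_smashMapRange (y0 : Y) (z0 : Z) (g : Y → Z) (φ : A →+ B) (f : Smash Y y0 A) :
    smashMap y0 z0 g B (smashMapRange y0 φ f) = smashMapRange z0 φ (smashMap y0 z0 g A f) := by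
  apply Subtype.ext
  rw [coe_smashMap, coe_smashMapRange, coe_smashMapRange, coe_smashMap,
    mapDomain_mapRange _ _ _ _ φ.map_add]
  ext z
  by_cases hz : z = z0
  · simp [hz]
  · simp [erase_ne hz]

variable {D : Type*} [Category D] (F : D ⥤ Pointed.{w})

theorem glim_ext {g h : glim F A}
    (H : ∀ d y, ((g.1 d : Smash _ _ A) : (F.obj d).X →₀ A) y = (h.1 d : _ →₀ A) y) : g = h :=
  Subtype.ext <| funext fun d => Subtype.ext <| Finsupp.ext (H d)

theorem glim_nsmul_apply (m : ℕ) (g : glim F A) (d : D) (y : (F.obj d).X) :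
    (((m • g).1 d : Smash _ _ A) : (F.obj d).X →₀ A) y = m • (g.1 d : _ →₀ A) y := rfl

theorem glim_nsmul_eq_zero {m : ℕ} (hA : ∀ a : A, m • a = 0) (g : glim F A) : m • g = 0 :=
  glim_ext F fun d y => by rw [glim_nsmul_apply, hA]; rfl

noncomputable def glimMap (φ : A →+ B) : glim F A →+ glim F B where
  toFun g := ⟨fun d => smashMapRange _ φ (g.1 d), fun d d' u => by
    rw [smashMap_smashMapRange, g.2 u]⟩
  map_zero' := Subtype.ext <| funext fun _ => map_zero _
  map_add' g h := Subtype.ext <| funext fun _ => map_add _ _ _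

theorem glimMap_apply (φ : A →+ B) (g : glim F A) (d : D) (y : (F.obj d).X) :
    (((glimMap F φ g).1 d : Smash _ _ B) : (F.obj d).X →₀ B) y = φ ((g.1 d : _ →₀ A) y) :=
  mapRange_apply (hf := φ.map_zero) ..

theorem glimMap_rho (φ : A →+ B) (f : Smash (plim F) (plimPt F) A) :
    glimMap F φ (rho F A f) = rho F B (smashMapRange _ φ f) :=
  Subtype.ext <| funext fun _ => (smashMap_smashMapRange ..).symm

noncomputable def cokerMap (φ : A →+ B) :
    glim F A ⧸ (rho F A).range →+ glim F B ⧸ (rho F B).range :=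
  QuotientAddGroup.map _ _ (glimMap F φ) <| by
    rintro _ ⟨f, rfl⟩
    exact ⟨_, (glimMap_rho F φ f).symm⟩

end Functoriality

section Divisible

open Opposite

variable {F : ℕᵒᵖ ⥤ Pointed.{w}} {A : Type*} [AddCommGroup A]

theorem MittagLeffler.exists_glim_nsmul_eq (hML : MittagLeffler F) {n : ℕ}
    (hA : ∀ a : A, ∃ b, n • b = a) (x : glim F A) : ∃ g : glim F A, n • g = x := by
  obtain ⟨g, hg⟩ := exists_seq_of_forall_exists_succ
    (α := fun t => Smash (towerObj F t) (towerPt F t) A)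
    (fun t g => n • g = x.1 (op t) ∧ (g : towerObj F t →₀ A) ∈ supported A ℤ (stableImage F t))
    (fun t g' g => smashMap _ _ (towerMap F t.le_succ) A g' = g)
    (by
      obtain ⟨k, hk, hks⟩ := exists_smash_nsmul_eq hA (x.1 (op 0))
      exact ⟨k, hk, (mem_supported ℤ _).2 ((Finset.coe_subset.2 hks).trans
        ((mem_supported ℤ _).1 (glim_mem_supported_stableImage x 0)))⟩)
    (fun t g ⟨hgx, hg⟩ => by
      obtain ⟨g', hg', hng', hpg'⟩ := exists_smash_lift_nsmul (towerMap_pt F t.le_succ)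
        (hML.image_stableImage t) hA (glim_mem_supported_stableImage x (t + 1)) hg
        (hgx.trans (glim_compat x t.le_succ).symm)
      exact ⟨g', ⟨hng', hg'⟩, hpg'⟩)
  refine ⟨⟨fun d => g d.unop, mem_glim_of_succ g fun t => (hg t).2⟩, ?_⟩
  apply Subtype.ext
  funext d
  exact (hg d.unop).1.1

theorem MittagLeffler.exists_coker_nsmul_eq (hML : MittagLeffler F) {n : ℕ}
    (hA : ∀ a : A, ∃ b, n • b = a) (x : glim F A ⧸ (rho F A).range) :
    ∃ y : glim F A ⧸ (rho F A).range, n • y = x :=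
  exists_nsmul_eq_of_surjective (QuotientAddGroup.mk'_surjective (rho F A).range)
    (hML.exists_glim_nsmul_eq hA) x

end Divisible

section Biprod

variable {G G₁ G₂ : Type*} [AddCommGroup G] [AddCommGroup G₁] [AddCommGroup G₂]

structure IsBiprod (i₁ : G₁ →+ G) (i₂ : G₂ →+ G) (p₁ : G →+ G₁) (p₂ : G →+ G₂) : Prop where
  p₁_i₁ : ∀ x, p₁ (i₁ x) = x
  p₁_i₂ : ∀ x, p₁ (i₂ x) = 0
  i₁_p₁_add_i₂_p₂ : ∀ x, i₁ (p₁ x) + i₂ (p₂ x) = x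

variable {i₁ : G₁ →+ G} {i₂ : G₂ →+ G} {p₁ : G →+ G₁} {p₂ : G →+ G₂}

theorem IsBiprod.isCompl_range (h : IsBiprod i₁ i₂ p₁ p₂) : IsCompl i₁.range i₂.range := by
  constructor
  · rw [AddSubgroup.disjoint_def]
    rintro _ ⟨x, rfl⟩ ⟨y, hy⟩
    rw [← h.p₁_i₁ x, ← hy, h.p₁_i₂, map_zero]
  · rw [codisjoint_iff, AddSubgroup.eq_top_iff']
    intro x
    rw [← h.i₁_p₁_add_i₂_p₂ x]
    exact AddSubgroup.add_mem_sup ⟨_, rfl⟩ ⟨_, rfl⟩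

theorem IsBiprod.almostDivisible (h : IsBiprod i₁ i₂ p₁ p₂)
    (h₁ : ∀ n : ℕ, 1 ≤ n → ∀ x : G₁, ∃ y, n • y = x)
    (h₂ : ∃ m : ℕ, 1 ≤ m ∧ ∀ x : G₂, m • x = 0) : AlmostDivisible G := by
  refine ⟨i₁.range, i₂.range, h.isCompl_range, ?_, ?_⟩
  · rintro n hn _ ⟨x, rfl⟩
    obtain ⟨y, rfl⟩ := h₁ n hn x
    exact ⟨i₁ y, ⟨y, rfl⟩, (map_nsmul ..).symm⟩
  · obtain ⟨m, hm, hm₂⟩ := h₂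
    refine ⟨m, hm, ?_⟩
    rintro _ ⟨x, rfl⟩
    rw [← map_nsmul, hm₂, map_zero]

theorem AddSubgroup.exists_isBiprod_of_isCompl {H₁ H₂ : AddSubgroup G} (h : IsCompl H₁ H₂) :
    ∃ (p₁ : G →+ H₁) (p₂ : G →+ H₂), IsBiprod H₁.subtype H₂.subtype p₁ p₂ := by
  have h' := AddSubgroup.toIntSubmodule.isCompl_iff.1 h
  refine ⟨(Submodule.projectionOnto _ _ h').toAddMonoidHom,
    (Submodule.projectionOnto _ _ h'.symm).toAddMonoidHom, ⟨fun x => ?_, fun x => ?_, fun x => ?_⟩⟩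
  · exact Submodule.projectionOnto_apply_left h' x
  · exact Submodule.projectionOnto_apply_right h' x
  · exact Submodule.projection_add_projection_eq_self h' x

variable {D : Type*} [Category D] (F : D ⥤ Pointed.{w})

theorem IsBiprod.glimMap (h : IsBiprod i₁ i₂ p₁ p₂) :
    IsBiprod (G := glim F G) (G₁ := glim F G₁) (G₂ := glim F G₂)
      (glimMap F i₁) (glimMap F i₂) (glimMap F p₁) (glimMap F p₂) :=
  ⟨fun x => glim_ext F fun d y => by simp only [glimMap_apply, h.p₁_i₁],
    fun x => glim_ext F fun d y => by simp only [glimMap_apply, h.p₁_i₂]; rfl,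
    fun x => glim_ext F fun d y => by
      rw [← h.i₁_p₁_add_i₂_p₂ ((x.1 d : _ →₀ G) y), ← glimMap_apply F p₁, ← glimMap_apply F p₂,
        ← glimMap_apply F i₁, ← glimMap_apply F i₂]
      rfl⟩

theorem IsBiprod.cokerMap (h : IsBiprod i₁ i₂ p₁ p₂) :
    IsBiprod (G := glim F G ⧸ (rho F G).range) (G₁ := glim F G₁ ⧸ (rho F G₁).range)
      (G₂ := glim F G₂ ⧸ (rho F G₂).range)
      (cokerMap F i₁) (cokerMap F i₂) (cokerMap F p₁) (cokerMap F p₂) := by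
  have hG := h.glimMap F
  refine ⟨fun x => ?_, fun x => ?_, fun x => ?_⟩ <;>
    induction x using QuotientAddGroup.induction_on with | H x => ?_
  · exact congrArg _ (hG.p₁_i₁ x)
  · exact (congrArg _ (hG.p₁_i₂ x)).trans (QuotientAddGroup.mk_zero _)
  · exact congrArg _ (hG.i₁_p₁_add_i₂_p₂ x)

end Biprod

/-- Let `A` be an abelian group and `F : ℕᵒᵖ ⥤ Set_*` a tower of pointed sets
satisfying the Mittag-Leffler condition.  Then: (1) if `A` is `p`-divisible for a
prime `p` then `G(X,A)` and `H(X,A)` are `p`-divisible; (2) if `A` is divisible then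
`G(X,A)` and `H(X,A)` are divisible; (3) if `A` is almost divisible then `G(X,A)`
and `H(X,A)` are almost divisible. -/
theorem stmt14 (F : ℕᵒᵖ ⥤ Pointed.{w}) {A : Type*} [AddCommGroup A]
    (hML : MittagLeffler F) :
    (∀ p : ℕ, p.Prime → (∀ a : A, ∃ b : A, p • b = a) →
      ((∀ g : glim F A, ∃ g' : glim F A, p • g' = g) ∧
        (∀ x : ↥(glim F A) ⧸ (rho F A).range, ∃ y, p • y = x))) ∧
    ((∀ n : ℕ, 1 ≤ n → ∀ a : A, ∃ b : A, n • b = a) →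
      ((∀ n : ℕ, 1 ≤ n → ∀ g : glim F A, ∃ g' : glim F A, n • g' = g) ∧
        (∀ n : ℕ, 1 ≤ n → ∀ x : ↥(glim F A) ⧸ (rho F A).range, ∃ y, n • y = x))) ∧
    (AlmostDivisible A →
      (AlmostDivisible (glim F A) ∧ AlmostDivisible (↥(glim F A) ⧸ (rho F A).range))) := by
  refine ⟨fun p _ hA => ⟨hML.exists_glim_nsmul_eq hA, hML.exists_coker_nsmul_eq hA⟩,
    fun hA => ⟨fun n hn => hML.exists_glim_nsmul_eq (hA n hn),
      fun n hn => hML.exists_coker_nsmul_eq (hA n hn)⟩,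
    fun ⟨D, B, hDB, hD, m, hm, hB⟩ => ?_⟩
  obtain ⟨p₁, p₂, hA⟩ := AddSubgroup.exists_isBiprod_of_isCompl hDB
  have hD' (n : ℕ) (hn : 1 ≤ n) (x : D) : ∃ y, n • y = x :=
    let ⟨y, hy, hyx⟩ := hD n hn x x.2
    ⟨⟨y, hy⟩, Subtype.ext hyx⟩
  have hB' (x : B) : m • x = 0 := Subtype.ext (hB x x.2)
  exact ⟨(hA.glimMap F).almostDivisible (fun n hn => hML.exists_glim_nsmul_eq (hD' n hn))
      ⟨m, hm, glim_nsmul_eq_zero F hB'⟩,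
    (hA.cokerMap F).almostDivisible (fun n hn => hML.exists_coker_nsmul_eq (hD' n hn))
      ⟨m, hm, nsmul_eq_zero_of_surjective (QuotientAddGroup.mk'_surjective _)
        (glim_nsmul_eq_zero F hB')⟩⟩
end

section
/- Let A be an abelian group that is not almost divisible. Then there exists a directed poset 𝒯 with |𝒯| = 2^ℵ₀ and a diagram X : 𝒯 → Set_* of pointed sets whose structure maps φ_{t,s} : X(t) → X(s) are all surjective (in particular, X satisfies the Mittag-Leffler condition), such that the cokernel H(X,A) of the natural map ρ is not cotorsion. -/
open CategoryTheory Finsupp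

universe u v w

/-- `C` is cotorsion, i.e. `Ext¹_ℤ(ℚ, C) = 0`.  Applying `Hom(-, C)` to the standard
free presentation `0 → ⊕_{n ∈ ℕ} ℤ → ⊕_{n ∈ ℕ} ℤ → ℚ → 0` (where the first map sends
`e_n ↦ e_n - (n+1)·e_{n+1}`) identifies `Ext¹_ℤ(ℚ, C)` with the cokernel of
`C^ℕ → C^ℕ, (x_n) ↦ (x_n - (n+1)x_{n+1})`; hence `Ext¹_ℤ(ℚ, C) = 0` iff every system
of equations `x_n - (n+1)·x_{n+1} = a_n` (`n ∈ ℕ`) is solvable in `C`. -/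
def Cotorsion (C : Type*) [AddCommGroup C] : Prop :=
  ∀ a : ℕ → C, ∃ x : ℕ → C, ∀ n : ℕ, x n - (n + 1) • x (n + 1) = a n
/-- A diagram of pointed sets indexed by a (nonempty) directed poset `T`, i.e. a
functor `Tᵒᵖ ⥤ Set_*` (with structure maps `X(t) → X(s)` for `t ≥ s`). -/
structure DirectedDiagram : Type (u + 1) where
  T : Type u
  [po : PartialOrder T]
  [dir : IsDirected T (· ≤ ·)]
  [ne : Nonempty T]
  F : Tᵒᵖ ⥤ Pointed.{u}

attribute [instance] DirectedDiagram.po DirectedDiagram.dir DirectedDiagram.ne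
/-!
Index by `ℕ → ℕ` with the pointwise order and let `X f` consist of a basepoint and the lattice
points `(n, k)` with `k < f n`; the structure maps send the points outside the smaller region to
the basepoint, so they are surjective. As any two regions lie in a third, an element of
`lim (X ∧ A)` is a function `ℕ × ℕ → A` that is finitely supported on every region, whereas a
thread of `lim X` passes through at most one lattice point, so the image of `ρ` consists of
finitely supported functions. The germ at infinity of the `n`-th column thus gives
`π n : H(X, A) → A^ℕ / A^(ℕ)`, and every element has only finitely many nonzero columns, since
a single region contains a chosen nonzero entry of each of them.

If `A` is not almost divisible, then for each `n` some `n! cₙ` is not divisible by some `N!` with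
`N > n` (otherwise `n! A` is divisible, hence injective, hence a direct summand with complement
killed by `n!`). Let `aₙ` be `cₙ` on the `n`-th column and `0` elsewhere. A solution of
`xₙ - (n + 1) xₙ₊₁ = aₙ` gives `x₀ = ∑_{m < N} m! aₘ + N! x_N`, and applying `π n` for one of the
infinitely many `n` with `π n x₀ = 0` makes `n! cₙ` divisible by `N!` modulo finitely supported
sequences, hence in `A`.
-/

section Smash

variable {Y : Type u} {Z : Type v} {y0 : Y} {z0 : Z} {g : Y → Z} {A : Type w} [AddCommGroup A]

lemma smashMap_apply_of_fiber_eq {z : Z} (hz : z ≠ z0) {y : Y} (hy : ∀ y', g y' = z ↔ y' = y)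
    (f : Smash Y y0 A) : (smashMap y0 z0 g A f).1 z = f.1 y := by
  classical
  show (mapDomain g f.1).erase z0 z = f.1 y
  rw [erase_ne hz, mapDomain, Finsupp.sum_apply, Finsupp.sum, Finset.sum_eq_single y]
  · rw [single_apply, if_pos ((hy y).2 rfl)]
  · intro y' _ hy'
    rw [single_apply, if_neg (mt (hy y').1 hy')]
  · intro hy'
    rw [notMem_support_iff.1 hy', single_zero, Finsupp.zero_apply]

lemma exists_mem_support_of_smashMap_apply_ne_zero {z : Z} (f : Smash Y y0 A)
    (h : (smashMap y0 z0 g A f).1 z ≠ 0) : ∃ y ∈ f.1.support, g y = z := by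
  classical
  have hz : z ∈ (mapDomain g f.1).support := mem_support_iff.2 fun h0 => h (by
    show (mapDomain g f.1).erase z0 z = 0
    by_cases hz : z = z0
    · rw [hz, erase_same]
    · rw [erase_ne hz, h0])
  simpa using mapDomain_support hz

end Smash

section OptionRestrict

variable {α : Type u}

open Classical in
noncomputable def optionRestrict {S : Set α} (S' : Set α) (z : Option S) : Option S' :=
  z.bind fun x => if hx : x.1 ∈ S' then some ⟨x, hx⟩ else none

variable {S S' S'' : Set α}

lemma optionRestrict_some_of_mem {x : S} (hx : x.1 ∈ S') :
    optionRestrict S' (some x) = some ⟨x, hx⟩ := by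
  simp [optionRestrict, hx]

lemma optionRestrict_some_of_notMem {x : S} (hx : x.1 ∉ S') :
    optionRestrict S' (some x) = none := by
  simp [optionRestrict, hx]

lemma optionRestrict_eq_some_iff (h : S' ⊆ S) {z : Option S} {x : S'} :
    optionRestrict S' z = some x ↔ z = some (Set.inclusion h x) := by
  rcases z with _ | ⟨z, hz⟩
  · simp [optionRestrict]
  · by_cases hz' : z ∈ S'
    · simp [optionRestrict_some_of_mem (x := ⟨z, hz⟩) hz', Subtype.ext_iff]
    · rw [optionRestrict_some_of_notMem (x := ⟨z, hz⟩) hz']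
      simp only [reduceCtorEq, false_iff, Option.some.injEq, Subtype.ext_iff]
      rintro rfl
      exact hz' x.2

lemma optionRestrict_surjective (h : S' ⊆ S) :
    Function.Surjective (optionRestrict S' : Option S → Option S') := by
  rintro (_ | x)
  · exact ⟨none, rfl⟩
  · exact ⟨_, (optionRestrict_eq_some_iff h).2 rfl⟩

lemma optionRestrict_self (z : Option S) : optionRestrict S z = z := by
  rcases z with _ | x
  · rfl
  · exact optionRestrict_some_of_mem x.2

lemma optionRestrict_optionRestrict (h : S'' ⊆ S') (z : Option S) :
    optionRestrict S'' (optionRestrict S' z) = optionRestrict S'' z := by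
  rcases z with _ | x
  · rfl
  by_cases hx' : x.1 ∈ S'
  · rw [optionRestrict_some_of_mem hx']
    by_cases hx'' : x.1 ∈ S''
    · rw [optionRestrict_some_of_mem hx'',
        optionRestrict_some_of_mem (x := ⟨x.1, hx'⟩) hx'']
    · rw [optionRestrict_some_of_notMem hx'',
        optionRestrict_some_of_notMem (x := ⟨x.1, hx'⟩) hx'']
  · rw [optionRestrict_some_of_notMem hx', optionRestrict_some_of_notMem (mt (@h _) hx')]
    rfl

end OptionRestrict

section RestrictDiagram

open Opposite

variable {α T : Type u} [Preorder T]

noncomputable def restrictDiagram (S : T → Set α) (hS : Monotone S) :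
    Tᵒᵖ ⥤ Pointed.{u} where
  obj t := ⟨Option (S t.unop), none⟩
  map {_ t'} _ := ⟨optionRestrict (S t'.unop), rfl⟩
  map_id _ := Pointed.Hom.ext (funext optionRestrict_self)
  map_comp _ v := Pointed.Hom.ext (funext fun z =>
    (optionRestrict_optionRestrict (hS (leOfHom v.unop)) z).symm)

namespace restrictDiagram

variable {S : T → Set α} {hS : Monotone S} {A : Type*} [AddCommGroup A]

lemma glim_apply_of_le (h : glim (restrictDiagram S hS) A) {t t' : T}
    (htt' : t ≤ t') {x : α} (hx : x ∈ S t) :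
    (h.1 (op t')).1 (some ⟨x, hS htt' hx⟩) = (h.1 (op t)).1 (some ⟨x, hx⟩) := by
  rw [← h.2 (homOfLE htt').op]
  exact (smashMap_apply_of_fiber_eq (z := some ⟨x, hx⟩) (Option.some_ne_none _)
    (fun _ => optionRestrict_eq_some_iff (hS htt')) (h.1 (op t'))).symm

noncomputable def glimOfFun (v : α → A) (hv : ∀ t, (Function.support v ∩ S t).Finite) :
    glim (restrictDiagram S hS) A where
  val t := ⟨Finsupp.ofSupportFinite (fun z : Option (S t.unop) => z.elim 0 fun x => v x) <|
      (((hv t.unop).preimage Subtype.val_injective.injOn).image some).subset <| by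
        rintro (_ | x) hx
        · exact absurd rfl hx
        · exact ⟨x, ⟨hx, x.2⟩, rfl⟩, rfl⟩
  property t t' u := by
    refine Subtype.ext (Finsupp.ext ?_)
    rintro (_ | ⟨x, hx⟩)
    · exact (smashMap _ _ _ A _).2
    · exact smashMap_apply_of_fiber_eq (Option.some_ne_none _)
        (fun _ => optionRestrict_eq_some_iff (hS (leOfHom u.unop))) _

variable (hS) in
noncomputable def glimEval {ι : α → T} (hι : ∀ x, x ∈ S (ι x)) :
    glim (restrictDiagram S hS) A →+ (α → A) where
  toFun h x := (h.1 (op (ι x))).1 (some ⟨x, hι x⟩)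
  map_zero' := rfl
  map_add' _ _ := rfl

variable {ι : α → T} {hι : ∀ x, x ∈ S (ι x)}

lemma glimEval_glimOfFun (v : α → A) (hv : ∀ t, (Function.support v ∩ S t).Finite) :
    glimEval hS hι (glimOfFun v hv) = v :=
  rfl

variable [IsDirected T (· ≤ ·)]

lemma glim_apply_eq (h : glim (restrictDiagram S hS) A) {t t' : T} {x : α}
    (hx : x ∈ S t) (hx' : x ∈ S t') :
    (h.1 (op t)).1 (some ⟨x, hx⟩) = (h.1 (op t')).1 (some ⟨x, hx'⟩) := by
  obtain ⟨t'', ht, ht'⟩ := directed_of (· ≤ ·) t t'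
  rw [← glim_apply_of_le h ht hx, ← glim_apply_of_le h ht' hx']

lemma plim_val_eq (y : plim (restrictDiagram S hS)) {t t' : T} {x : S t} {x' : S t'}
    (hx : y.1 (op t) = some x) (hx' : y.1 (op t') = some x') : x.1 = x'.1 := by
  obtain ⟨t'', ht, ht'⟩ := directed_of (· ≤ ·) t t'
  have e := (optionRestrict_eq_some_iff (hS ht)).1 ((y.2 (homOfLE ht).op).trans hx)
  have e' := (optionRestrict_eq_some_iff (hS ht')).1 ((y.2 (homOfLE ht').op).trans hx')
  simpa [Subtype.ext_iff] using e.symm.trans e'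

lemma glimEval_apply (h : glim (restrictDiagram S hS) A) {t : T} {x : α} (hx : x ∈ S t) :
    glimEval hS hι h x = (h.1 (op t)).1 (some ⟨x, hx⟩) :=
  glim_apply_eq h _ hx

lemma finite_support_glimEval_rho (f : Smash (plim (restrictDiagram S hS)) (plimPt _) A) :
    (Function.support (glimEval hS hι (rho _ A f))).Finite := by
  have hsub : ∀ y : plim (restrictDiagram S hS),
      {x | y.1 (op (ι x)) = some ⟨x, hι x⟩}.Subsingleton :=
    fun y x hx x' hx' => plim_val_eq y hx hx'
  refine (f.1.support.finite_toSet.biUnion fun y _ => (hsub y).finite).subset fun x hx => ?_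
  obtain ⟨y, hy, hyx⟩ := exists_mem_support_of_smashMap_apply_ne_zero f hx
  exact Set.mem_biUnion hy hyx

end restrictDiagram

end RestrictDiagram

section Cotorsion

open Nat

lemma eq_sum_factorial_smul_add_factorial_smul {C : Type*} [AddCommGroup C] {a x : ℕ → C}
    (hx : ∀ n : ℕ, x n - (n + 1) • x (n + 1) = a n) (N : ℕ) :
    x 0 = ∑ m ∈ Finset.range N, m ! • a m + N ! • x N := by
  induction N with
  | zero => simp
  | succ N ih =>
    rw [Finset.sum_range_succ, ih, ← hx N, factorial_succ, mul_comm, mul_smul, smul_sub]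
    abel

lemma not_cotorsion_of_projections {C G : Type*} [AddCommGroup C] [AddCommGroup G]
    (π : ℕ → C →+ G) (a : ℕ → C) (hfin : ∀ x : C, {n | π n x ≠ 0}.Finite)
    (hdiag : ∀ m n, m ≠ n → π n (a m) = 0)
    (hndiv : ∀ n, ∃ N, n < N ∧ ∀ y : G, N ! • y ≠ n ! • π n (a n)) :
    ¬ Cotorsion C := by
  intro hC
  obtain ⟨x, hx⟩ := hC a
  obtain ⟨n, hn⟩ := (hfin (x 0)).infinite_compl.nonempty
  obtain ⟨N, hnN, hN⟩ := hndiv n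
  have hsum : π n (∑ m ∈ Finset.range N, m ! • a m) = n ! • π n (a n) := by
    rw [map_sum, Finset.sum_eq_single_of_mem n (Finset.mem_range.2 hnN) fun m _ hm => by
      rw [map_nsmul, hdiag m n hm, smul_zero], map_nsmul]
  refine hN (-π n (x N)) ?_
  have := congrArg (π n) (eq_sum_factorial_smul_add_factorial_smul hx N)
  rw [not_not.1 hn, map_add, hsum, map_nsmul] at this
  rw [smul_neg, neg_eq_iff_add_eq_zero, add_comm, ← this]

end Cotorsion

lemma Filter.Germ.nsmul_ne_const {ι M : Type*} [AddMonoid M] {l : Filter ι} [l.NeBot] {m : ℕ}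
    {c : M} (h : ∀ y : M, m • y ≠ c) (y : l.Germ M) : m • y ≠ ↑c :=
  y.inductionOn fun y hy => by
    obtain ⟨k, hk⟩ := (Filter.Germ.coe_eq.1 ((Filter.Germ.coe_smul m y).trans hy)).exists
    exact h (y k) hk

section UnderGraph

open Opposite Nat Filter

-- A synonym, so that the only category structure on it is the one given by the pointwise order
-- (on `ℕ → ℕ` itself the product category instance would get in the way).
def NatSeq : Type := ℕ → ℕ

instance : SemilatticeSup NatSeq := inferInstanceAs (SemilatticeSup (ℕ → ℕ))

instance : Nonempty NatSeq := inferInstanceAs (Nonempty (ℕ → ℕ))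

lemma NatSeq.mk_eq_two_power_aleph0 : Cardinal.mk NatSeq = 2 ^ Cardinal.aleph0 := by
  rw [NatSeq, ← Cardinal.power_def, Cardinal.mk_nat, Cardinal.power_self_eq le_rfl]

def underGraph (f : NatSeq) : Set (ℕ × ℕ) := {p | p.2 < f p.1}

lemma underGraph_mono : Monotone underGraph := fun _ _ hfg p hp => lt_of_lt_of_le hp (hfg p.1)

def NatSeq.const (m : ℕ) : NatSeq := fun _ => m

lemma mem_underGraph_const (p : ℕ × ℕ) : p ∈ underGraph (NatSeq.const (p.2 + 1)) :=
  Nat.lt_succ_self _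

noncomputable abbrev underGraphDiagram : NatSeqᵒᵖ ⥤ Pointed.{0} :=
  restrictDiagram underGraph underGraph_mono

noncomputable abbrev underGraphEval (A : Type) [AddCommGroup A] :
    glim underGraphDiagram A →+ (ℕ × ℕ → A) :=
  restrictDiagram.glimEval underGraph_mono mem_underGraph_const

variable {A : Type} [AddCommGroup A]

lemma finite_setOf_exists_underGraphEval_ne_zero (h : glim underGraphDiagram A) :
    {n | ∃ k, underGraphEval A h (n, k) ≠ 0}.Finite := by
  choose! k hk using fun n (hn : ∃ k, underGraphEval A h (n, k) ≠ 0) => hn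
  let f : NatSeq := fun n => k n + 1
  let g (n : ℕ) : Option (underGraph f) := some ⟨(n, k n), Nat.lt_succ_self _⟩
  have hg : g.Injective := fun m n hmn =>
    congrArg (Prod.fst ∘ Subtype.val) (Option.some_injective _ hmn)
  refine ((h.1 (op f)).1.support.finite_toSet.preimage hg.injOn).subset fun n hn =>
    mem_support_iff.2 ?_
  have hn := hk n hn
  rwa [restrictDiagram.glimEval_apply h (t := f) (Nat.lt_succ_self _)] at hn

noncomputable def columnGerm (n : ℕ) :
    glim underGraphDiagram A ⧸ (rho _ A).range →+ Germ (cofinite : Filter ℕ) A :=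
  QuotientAddGroup.lift _ ((Germ.coeAddHom _).comp
    ((LinearMap.funLeft ℕ A (Prod.mk n)).toAddMonoidHom.comp (underGraphEval A))) <| by
    rintro _ ⟨f, rfl⟩
    exact Germ.coe_eq.2 (eventually_cofinite.2
      ((restrictDiagram.finite_support_glimEval_rho f).preimage (Prod.mk_right_injective n).injOn))

lemma columnGerm_mk (n : ℕ) (h : glim underGraphDiagram A) :
    columnGerm n (QuotientAddGroup.mk h) = ↑fun k => underGraphEval A h (n, k) :=
  rfl

noncomputable def constOnColumn (n : ℕ) (c : A) : glim underGraphDiagram A :=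
  restrictDiagram.glimOfFun (fun p => if p.1 = n then c else 0) fun f =>
    ((Set.finite_singleton n).prod (Set.finite_Iio (f n))).subset fun p ⟨hp, hpf⟩ => by
      have hpn : p.1 = n := by_contra fun hpn => hp (if_neg hpn)
      exact ⟨hpn, hpn ▸ hpf⟩

lemma columnGerm_constOnColumn (m n : ℕ) (c : A) :
    columnGerm n (QuotientAddGroup.mk (constOnColumn m c)) = if n = m then ↑c else 0 := by
  simp only [columnGerm_mk, constOnColumn, restrictDiagram.glimEval_glimOfFun]
  split_ifs <;> rfl

lemma not_cotorsion_underGraph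
    (hA : ∀ n : ℕ, ∃ c : A, ∃ N, n < N ∧ ∀ y : A, N ! • y ≠ n ! • c) :
    ¬ Cotorsion (glim underGraphDiagram A ⧸ (rho _ A).range) := by
  choose c N hN hc using hA
  refine not_cotorsion_of_projections columnGerm
    (fun n => QuotientAddGroup.mk (constOnColumn n (c n))) (fun x => ?_) (fun m n hmn => ?_)
    fun n => ⟨N n, hN n, fun y => ?_⟩
  · induction x using QuotientAddGroup.induction_on with | H h => ?_
    refine (finite_setOf_exists_underGraphEval_ne_zero h).subset fun n hn => ?_
    refine not_forall.1 fun hzero => hn ?_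
    rw [columnGerm_mk, funext hzero]
    rfl
  · rw [columnGerm_constOnColumn, if_neg hmn.symm]
  · rw [columnGerm_constOnColumn, if_pos rfl, ← Germ.const_smul]
    exact Germ.nsmul_ne_const (hc n) y

end UnderGraph

section AlmostDivisible

open Nat

variable {A : Type*} [AddCommGroup A]

lemma AddSubgroup.isCompl_ker_of_retraction {S : AddSubgroup A} (r : A →+ S)
    (hr : ∀ s : S, r s = s) : IsCompl S r.ker :=
  AddSubgroup.toIntSubmodule.symm.isCompl
    (LinearMap.isCompl_of_proj (p := AddSubgroup.toIntSubmodule S) (f := r.toIntLinearMap) hr)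

lemma DivisibleSubgroup.exists_retraction {S : AddSubgroup A} (hS : DivisibleSubgroup S) :
    ∃ r : A →+ S, ∀ s : S, r s = s := by
  have : DivisibleBy S ℕ := divisibleByOfSMulRightSurj S ℕ fun {n} hn x => by
    obtain ⟨y, hy, hyx⟩ := hS n (Nat.one_le_iff_ne_zero.2 hn) x x.2
    exact ⟨⟨y, hy⟩, Subtype.ext hyx⟩
  have : DivisibleBy S ℤ := AddGroup.divisibleByIntOfDivisibleByNat S
  obtain ⟨r, hr⟩ := (Module.Baer.of_divisible S).injective.out S.subtype.toIntLinearMap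
    Subtype.val_injective LinearMap.id
  exact ⟨r.toAddMonoidHom, hr⟩

lemma divisibleSubgroup_range_factorial_nsmul {n : ℕ}
    (h : ∀ (c : A) (N : ℕ), n < N → ∃ y : A, N ! • y = n ! • c) :
    DivisibleSubgroup (DistribSMul.toAddMonoidHom A n !).range := by
  rintro k hk _ ⟨a, rfl⟩
  obtain ⟨t, ht⟩ : k * n ! ∣ (k * n ! + n + 1)! :=
    Nat.dvd_factorial (by positivity) (by omega)
  obtain ⟨y, hy⟩ := h a _ (by omega : n < k * n ! + n + 1)
  refine ⟨n ! • t • y, ⟨t • y, rfl⟩, ?_⟩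
  rw [DistribSMul.toAddMonoidHom_apply, ← hy, ht, smul_smul, smul_smul, mul_assoc]

lemma almostDivisible_of_divisibleSubgroup {S : AddSubgroup A} (hS : DivisibleSubgroup S)
    {m : ℕ} (hm : m ≠ 0) (hmS : ∀ x : A, m • x ∈ S) : AlmostDivisible A := by
  obtain ⟨r, hr⟩ := hS.exists_retraction
  refine ⟨S, r.ker, AddSubgroup.isCompl_ker_of_retraction r hr, hS, m,
    Nat.one_le_iff_ne_zero.2 hm, fun x hx => ?_⟩
  have h := hr ⟨m • x, hmS x⟩
  rw [map_nsmul, AddMonoidHom.mem_ker.1 hx, smul_zero] at h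
  exact congrArg Subtype.val h.symm

lemma exists_factorial_nsmul_ne_of_not_almostDivisible (hA : ¬ AlmostDivisible A) (n : ℕ) :
    ∃ c : A, ∃ N, n < N ∧ ∀ y : A, N ! • y ≠ n ! • c := by
  by_contra! h
  exact hA (almostDivisible_of_divisibleSubgroup (divisibleSubgroup_range_factorial_nsmul h)
    n.factorial_ne_zero fun x => ⟨x, rfl⟩)

end AlmostDivisible

/-- Let `A` be an abelian group that is *not* almost divisible.  Then there exist a
directed poset `T` with `|T| = 2^ℵ₀` and a diagram `X : Tᵒᵖ ⥤ Set_*` of pointed sets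
all of whose structure maps are surjective (in particular `X` satisfies the
Mittag-Leffler condition), such that the cokernel `H(X,A)` of the natural map `ρ` is
not cotorsion. -/
theorem stmt18 {A : Type} [AddCommGroup A] (hA : ¬ AlmostDivisible A) :
    ∃ X : DirectedDiagram.{0},
      Cardinal.mk X.T = 2 ^ Cardinal.aleph0 ∧
      (∀ (s t : X.T) (hst : s ≤ t),
        Function.Surjective (X.F.map (homOfLE hst).op).toFun) ∧
      ¬ Cotorsion (↥(glim X.F A) ⧸ (rho X.F A).range) :=
  ⟨⟨NatSeq, underGraphDiagram⟩, NatSeq.mk_eq_two_power_aleph0,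
    fun _ _ hst => optionRestrict_surjective (underGraph_mono hst),
    not_cotorsion_underGraph (exists_factorial_nsmul_ne_of_not_almostDivisible hA)⟩
end
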